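/- arXiv:2301.09675 — 2 statements merged into one kernel-verified Lean document; each statement's English description precedes it below -/
import Mathlib

section
/- (Coupling step 2.) Under the stated one-inner-step setup, for every u ∈ ℝ^l: α_s ⟨∇φ(v_{k+1}), v_{k+1} − u⟩ ≤ α_s φ(v_{k+1}) + (α_s (1 − τ_{1,s} − τ₂)/τ_{1,s}) φ(y_k) + (α_s/τ_{1,s}) · ( τ₂ φ(ṽ^s) − E[φ(y_{k+1})] ) + V_{z_k}(u) − E[V_{z_{k+1}}(u)]. -/
open scoped RealInnerProductSpace

/-!
Write `g_i` for the variance-reduced gradient estimator. Optimality of the mirror step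
`z_{k+1}` gives the three-point identity
`α ⟪g_i, z_{k+1} - u⟫ = V_{z_k}(u) - V_{z_k}(z_{k+1}) - V_{z_{k+1}}(u)`.
The gradient step `y_{k+1}`, compared with the point `v_{k+1} + τ₁ (z_{k+1} - z_k)`, gains enough
to pay for `α ⟪g_i, z_k - z_{k+1}⟫` up to the term `½ ‖z_{k+1} - z_k‖²`, which strong convexity of
`w` absorbs; the price is `α / (16 L̄ τ₁) ‖g_i - ∇φ(v_{k+1})‖²_*` (by the descent lemma and Young's
inequality). Averaging over `i`, the estimator is unbiased, and co-coercivity of the `φ_i` bounds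
its second moment by `8 L̄` times the Bregman divergence of `φ` from `v_{k+1}` to `ṽ`. Finally
`τ₁ (v_{k+1} - z_k) = ½ (ṽ - v_{k+1}) + (½ - τ₁)(y_k - v_{k+1})`, and convexity of `φ` along
`y_k - v_{k+1}` turns `α ⟪∇φ(v_{k+1}), v_{k+1} - z_k⟫` into the `φ(y_k)` and `φ(ṽ)` terms.
-/

variable {E : Type*} [NormedAddCommGroup E] [InnerProductSpace ℝ E]

/-- `q u` is the least upper bound of `⟪u, v⟫` over the `p`-unit ball; unlike an `sSup`, this
carries no junk value when the ball is unbounded. -/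
def IsDualNorm (p q : E → ℝ) : Prop :=
  ∀ u, IsLUB ((fun v => ⟪u, v⟫) '' {v | p v ≤ 1}) (q u)

namespace IsDualNorm

variable {p : Seminorm ℝ E} {q : E → ℝ}

theorem inner_le (h : IsDualNorm p q) {u v : E} (hv : p v ≤ 1) : ⟪u, v⟫ ≤ q u :=
  (h u).1 ⟨v, hv, rfl⟩

theorem le_of_forall_inner_le (h : IsDualNorm p q) {u : E} {b : ℝ}
    (hb : ∀ v, p v ≤ 1 → ⟪u, v⟫ ≤ b) : q u ≤ b :=
  (h u).2 <| by rintro _ ⟨v, hv, rfl⟩; exact hb v hv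

theorem nonneg (h : IsDualNorm p q) (u : E) : 0 ≤ q u := by
  simpa using h.inner_le (u := u) (v := 0) (by simp)

theorem inner_le_mul (h : IsDualNorm p q) (u v : E) : ⟪u, v⟫ ≤ q u * p v := by
  -- `p v` may vanish, so scale `v` by `(p v + δ)⁻¹` and let `δ → 0`
  refine le_of_forall_pos_le_add fun ε hε => ?_
  set δ := ε / (q u + 1)
  have hδ : 0 < δ := div_pos hε (by linarith [h.nonneg u])
  have hscaled : p ((p v + δ)⁻¹ • v) ≤ 1 := by
    rw [map_smul_eq_mul, Real.norm_eq_abs, abs_inv, abs_of_pos (by positivity),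
      inv_mul_le_one₀ (by positivity)]
    linarith
  have key := h.inner_le (u := u) hscaled
  rw [real_inner_smul_right, inv_mul_le_iff₀ (by positivity)] at key
  have hqδ : q u * δ ≤ ε := by
    rw [mul_div_assoc', div_le_iff₀ (by linarith [h.nonneg u])]
    nlinarith [h.nonneg u]
  nlinarith

noncomputable def toSeminorm (h : IsDualNorm p q) : Seminorm ℝ E :=
  Seminorm.ofSMulLE q
    (le_antisymm (h.le_of_forall_inner_le fun v _ => by simp) (h.nonneg 0))
    (fun a b => h.le_of_forall_inner_le fun v hv => by
      rw [inner_add_left]; exact add_le_add (h.inner_le hv) (h.inner_le hv))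
    (fun r u => h.le_of_forall_inner_le fun v hv => by
      rw [real_inner_smul_left, ← real_inner_smul_right]
      calc ⟪u, r • v⟫ ≤ q u * p (r • v) := h.inner_le_mul u _
        _ = ‖r‖ * (q u * p v) := by rw [map_smul_eq_mul]; ring
        _ ≤ ‖r‖ * q u := by gcongr; exact mul_le_of_le_one_right (h.nonneg u) hv)

end IsDualNorm

theorem Seminorm.exists_norm_le_mul [FiniteDimensional ℝ E] (p : Seminorm ℝ E)
    (hp : ∀ x, p x = 0 → x = 0) : ∃ C, ∀ v, ‖v‖ ≤ C * p v := by
  have hcont : Continuous p := continuousOn_univ.mp (p.convexOn.continuousOn isOpen_univ)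
  have hpos : ∀ v ∈ Metric.sphere (0 : E) 1, p v ≠ 0 := fun v hv h0 => by
    simp [hp v h0] at hv
  obtain ⟨C, hC⟩ := (isCompact_sphere (0 : E) 1).exists_bound_of_continuousOn
    (hcont.continuousOn.inv₀ hpos)
  refine ⟨C, fun v => ?_⟩
  rcases eq_or_ne v 0 with rfl | hv
  · simp
  have hnv : 0 < ‖v‖ := norm_pos_iff.mpr hv
  have hpv : 0 < p v := (apply_nonneg p v).lt_of_ne' fun h0 => hv (hp v h0)
  have hmem : ‖v‖⁻¹ • v ∈ Metric.sphere (0 : E) 1 := by simp [norm_smul, hnv.ne']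
  have hval : ‖(⇑p)⁻¹ (‖v‖⁻¹ • v)‖ = ‖v‖ / p v := by
    simp [map_smul_eq_mul, abs_of_pos hpv, div_eq_mul_inv, mul_comm]
  rw [← div_le_iff₀ hpv, ← hval]
  exact hC _ hmem

theorem isDualNorm_sSup [FiniteDimensional ℝ E] (p : Seminorm ℝ E) (hp : ∀ x, p x = 0 → x = 0) :
    IsDualNorm p fun u => sSup ((fun v => ⟪u, v⟫) '' {v | p v ≤ 1}) := by
  obtain ⟨C, hC⟩ := p.exists_norm_le_mul hp
  refine fun u => isLUB_csSup ⟨_, 0, by simp, rfl⟩ ⟨‖u‖ * |C|, ?_⟩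
  rintro _ ⟨v, hv, rfl⟩
  calc ⟪u, v⟫ ≤ ‖u‖ * ‖v‖ := real_inner_le_norm u v
    _ ≤ ‖u‖ * (|C| * p v) := by gcongr; exact (hC v).trans (by gcongr; exact le_abs_self C)
    _ ≤ ‖u‖ * |C| := by gcongr; exact mul_le_of_le_one_right (abs_nonneg C) hv

def bregmanDiv (w : E → ℝ) (w' : E → E) (x y : E) : ℝ := w y - w x - ⟪w' x, y - x⟫

theorem bregmanDiv_three_point (w : E → ℝ) (w' : E → E) (x z u : E) :
    bregmanDiv w w' x u - bregmanDiv w w' x z - bregmanDiv w w' z u = ⟪w' x - w' z, z - u⟫ := by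
  simp only [bregmanDiv, inner_sub_left, inner_sub_right]
  ring

section Average

variable {m : ℕ} {φi : Fin m → E → ℝ} {gφi : Fin m → E → E}

theorem average_add_inner_sub_le (h : ∀ i x y, φi i x + ⟪gφi i x, y - x⟫ ≤ φi i y) (x y : E) :
    (1 / m : ℝ) * ∑ i, φi i x + ⟪(m : ℝ)⁻¹ • ∑ i, gφi i x, y - x⟫
      ≤ (1 / m : ℝ) * ∑ i, φi i y := by
  rw [real_inner_smul_left, sum_inner, one_div, ← mul_add, ← Finset.sum_add_distrib]
  gcongr with i
  exact h i x y

theorem seminorm_average_sub_le (p q : Seminorm ℝ E) {L : Fin m → ℝ}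
    (h : ∀ i x y, q (gφi i x - gφi i y) ≤ L i * p (x - y)) (x y : E) :
    q ((m : ℝ)⁻¹ • ∑ i, gφi i x - (m : ℝ)⁻¹ • ∑ i, gφi i y) ≤ (∑ i, L i) / m * p (x - y) := by
  rw [← smul_sub, ← Finset.sum_sub_distrib, map_smul_eq_mul, Real.norm_eq_abs,
    abs_of_nonneg (by positivity), div_mul_eq_mul_div, Finset.sum_mul, inv_mul_eq_div]
  gcongr
  exact (Finset.le_sum_of_subadditive q (map_zero q).le (map_add_le_add q) _ _).trans
    (Finset.sum_le_sum fun i _ => h i x y)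

end Average

section ImportanceSampling

variable {m : ℕ} {pr : Fin m → ℝ}

theorem importance_weights_pos_and_sum_eq_one (hm : 0 < m) {L : Fin m → ℝ} (hL : ∀ i, 0 < L i)
    {Lbar : ℝ} (hLbar : Lbar = (∑ i, L i) / m) (hpr : ∀ i, pr i = L i / (m * Lbar)) :
    0 < Lbar ∧ (∀ i, 0 < pr i) ∧ ∑ i, pr i = 1 := by
  have hmR : (0 : ℝ) < m := by exact_mod_cast hm
  have hLsum : 0 < ∑ i, L i := Finset.sum_pos (fun i _ => hL i) ⟨⟨0, hm⟩, Finset.mem_univ _⟩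
  have hLbar_pos : 0 < Lbar := hLbar ▸ div_pos hLsum hmR
  refine ⟨hLbar_pos, fun i => hpr i ▸ div_pos (hL i) (mul_pos hmR hLbar_pos), ?_⟩
  simp_rw [hpr, ← Finset.sum_div, hLbar]
  field_simp

theorem sum_smul_add_div_smul (hpr : ∀ i, pr i ≠ 0) (hsum : ∑ i, pr i = 1) (a : E)
    (b : Fin m → E) : ∑ i, pr i • (a + (1 / (m * pr i)) • b i) = a + (m : ℝ)⁻¹ • ∑ i, b i := by
  have hterm : ∀ i, pr i • (a + (1 / (m * pr i)) • b i) = pr i • a + (m : ℝ)⁻¹ • b i :=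
    fun i => by rw [smul_add, smul_smul, mul_one_div, div_mul_cancel_right₀ (hpr i)]
  simp only [hterm, Finset.sum_add_distrib, ← Finset.sum_smul, hsum, one_smul, Finset.smul_sum]

theorem sum_mul_seminorm_sub_div_smul_sq_le (hm : 0 < m) (q : Seminorm ℝ E) {L : Fin m → ℝ}
    (hL : ∀ i, 0 < L i) {Lbar : ℝ} (hLbar : Lbar = (∑ i, L i) / m)
    (hpr : ∀ i, pr i = L i / (m * Lbar)) {a : E} {b : Fin m → E} {D : Fin m → ℝ} {Dbar : ℝ}
    (ha : q a ^ 2 ≤ 2 * Lbar * Dbar) (hb : ∀ i, q (b i) ^ 2 ≤ 2 * L i * D i)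
    (hD : Dbar = (1 / m : ℝ) * ∑ i, D i) :
    ∑ i, pr i * q (a - (1 / (m * pr i)) • b i) ^ 2 ≤ 8 * Lbar * Dbar := by
  have hmR : (0 : ℝ) < m := by exact_mod_cast hm
  obtain ⟨hLbar_pos, hpr_pos, hsum⟩ := importance_weights_pos_and_sum_eq_one hm hL hLbar hpr
  have hterm : ∀ i, pr i * q (a - (1 / (m * pr i)) • b i) ^ 2
      ≤ 2 * q a ^ 2 * pr i + 4 * Lbar / m * D i := fun i => by
    have htri : q (a - (1 / (m * pr i)) • b i) ≤ q a + 1 / (m * pr i) * q (b i) := by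
      refine (map_sub_le_add q _ _).trans_eq ?_
      rw [map_smul_eq_mul, Real.norm_eq_abs, abs_of_pos (one_div_pos.mpr (mul_pos hmR (hpr_pos i)))]
    -- the importance weights `pr i ∝ L i` cancel the smoothness constants
    have hweight : pr i * (1 / (m * pr i)) ^ 2 * (2 * L i) = 2 * Lbar / m := by
      rw [hpr]; field_simp [(hL i).ne']
    set k := 1 / (m * pr i)
    have hsq : q (a - k • b i) ^ 2 ≤ 2 * q a ^ 2 + 2 * k ^ 2 * q (b i) ^ 2 := by
      nlinarith [apply_nonneg q (a - k • b i), sq_nonneg (q a - k * q (b i))]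
    calc pr i * q (a - k • b i) ^ 2 ≤ pr i * (2 * q a ^ 2 + 2 * k ^ 2 * (2 * L i * D i)) := by
          refine mul_le_mul_of_nonneg_left (hsq.trans ?_) (hpr_pos i).le
          gcongr
          exact hb i
      _ = 2 * q a ^ 2 * pr i + 4 * Lbar / m * D i := by
          linear_combination (2 * D i) * hweight
  calc ∑ i, pr i * q (a - (1 / (m * pr i)) • b i) ^ 2
      ≤ ∑ i, (2 * q a ^ 2 * pr i + 4 * Lbar / m * D i) := Finset.sum_le_sum fun i _ => hterm i
    _ = 2 * q a ^ 2 + 4 * Lbar * Dbar := by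
      rw [Finset.sum_add_distrib, ← Finset.mul_sum, ← Finset.mul_sum, hsum, hD]; ring
    _ ≤ 8 * Lbar * Dbar := by linarith

end ImportanceSampling

theorem mul_inner_sub_le_of_linear_coupling {f : E → ℝ} {f' : E → E} {z vs y v u : E}
    {τ α Ef V EV : ℝ} (hτ : 0 < τ) (hτ₂ : τ ≤ 1 / 2) (hα : 0 ≤ α)
    (hv : v = τ • z + (1 / 2 : ℝ) • vs + (1 - τ - 1 / 2) • y)
    (htangent : f v + ⟪f' v, y - v⟫ ≤ f y)
    (hz : α * ⟪f' v, z - u⟫ ≤ α / τ * (f v - Ef) + α / (2 * τ) * bregmanDiv f f' v vs + V - EV) :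
    α * ⟪f' v, v - u⟫
      ≤ α * f v + α * (1 - τ - 1 / 2) / τ * f y + α / τ * (1 / 2 * f vs - Ef) + V - EV := by
  have hsplit : τ • (v - z) = (1 / 2 : ℝ) • (vs - v) + (1 - τ - 1 / 2) • (y - v) := by
    rw [hv]; module
  have hinner : τ * ⟪f' v, v - z⟫ = 1 / 2 * ⟪f' v, vs - v⟫ + (1 - τ - 1 / 2) * ⟪f' v, y - v⟫ := by
    rw [← real_inner_smul_right, hsplit, inner_add_right, real_inner_smul_right,
      real_inner_smul_right]
  have hy : α / τ * ((1 - τ - 1 / 2) * ⟪f' v, y - v⟫)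
      ≤ α / τ * ((1 - τ - 1 / 2) * (f y - f v)) := by
    gcongr
    · linarith
    · linarith
  have hατ : α / τ * τ = α := div_mul_cancel₀ α hτ.ne'
  rw [← sub_add_sub_cancel v z u, inner_add_right, mul_add,
    show α * ⟪f' v, v - z⟫ = α / τ * (τ * ⟪f' v, v - z⟫) by rw [← mul_assoc, hατ], hinner]
  rw [bregmanDiv] at hz
  linear_combination hz + hy + f v * hατ

variable [CompleteSpace E]

theorem HasGradientAt.hasDerivAt_add_smul {f : E → ℝ} {g x d : E} {t : ℝ}
    (hf : HasGradientAt f g (x + t • d)) : HasDerivAt (fun t : ℝ => f (x + t • d)) ⟪g, d⟫ t := by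
  have hline : HasDerivAt (fun t : ℝ => x + t • d) d t := by
    simpa using ((hasDerivAt_id t).smul_const d).const_add x
  simpa [InnerProductSpace.toDual_apply_apply, Function.comp_def] using
    hf.hasFDerivAt.comp_hasDerivAt t hline

theorem ConvexOn.add_inner_sub_le_of_hasGradientAt {f : E → ℝ} {g x : E}
    (hf : ConvexOn ℝ Set.univ f) (hg : HasGradientAt f g x) (y : E) : f x + ⟪g, y - x⟫ ≤ f y := by
  have hline : ConvexOn ℝ Set.univ fun t : ℝ => f (x + t • (y - x)) := by
    simpa [Function.comp_def, AffineMap.lineMap_apply_module', add_comm] using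
      hf.comp_affineMap (AffineMap.lineMap x y)
  have hderiv :=
    (show HasGradientAt f g (x + (0 : ℝ) • (y - x)) by simpa using hg).hasDerivAt_add_smul
  have := hline.le_slope_of_hasDerivAt (Set.mem_univ 0) (Set.mem_univ 1) zero_lt_one hderiv
  simp only [slope_def_field, one_smul, add_sub_cancel, zero_smul, add_zero, sub_zero,
    div_one] at this
  linarith

theorem IsLocalMin.hasGradientAt_eq_zero {f : E → ℝ} {g a : E} (h : IsLocalMin f a)
    (hf : HasGradientAt f g a) : g = 0 :=
  (InnerProductSpace.toDual ℝ E).map_eq_zero_iff.mp (h.hasFDerivAt_eq_zero hf.hasFDerivAt)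

theorem hasGradientAt_average {m : ℕ} {φi : Fin m → E → ℝ} {gφi : Fin m → E → E} {x : E}
    (h : ∀ i, HasGradientAt (φi i) (gφi i x) x) :
    HasGradientAt (fun x => (1 / m : ℝ) * ∑ i, φi i x) ((m : ℝ)⁻¹ • ∑ i, gφi i x) x := by
  rw [hasGradientAt_iff_hasFDerivAt, map_smul, map_sum, ← one_div]
  exact (HasFDerivAt.fun_sum fun i _ => (h i).hasFDerivAt).const_mul _

namespace IsDualNorm

variable {p q : Seminorm ℝ E} {f : E → ℝ} {f' : E → E} {L : ℝ}

theorem le_add_inner_add_sq (hpq : IsDualNorm p q) (hf : ∀ x, HasGradientAt f (f' x) x)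
    (hL : ∀ x y, q (f' x - f' y) ≤ L * p (x - y)) (x d : E) :
    f (x + d) ≤ f x + ⟪f' x, d⟫ + L / 2 * p d ^ 2 := by
  have hline : ∀ t : ℝ, HasDerivAt (fun t : ℝ => f (x + t • d)) ⟪f' (x + t • d), d⟫ t :=
    fun t => (hf _).hasDerivAt_add_smul
  have hbound : ∀ t : ℝ, HasDerivAt (fun t : ℝ => f x + t * ⟪f' x, d⟫ + L / 2 * p d ^ 2 * t ^ 2)
      (⟪f' x, d⟫ + L * p d ^ 2 * t) t := fun t =>
    ((((hasDerivAt_id t).mul_const ⟪f' x, d⟫).const_add (f x)).add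
      ((hasDerivAt_pow 2 t).const_mul (L / 2 * p d ^ 2))).congr_deriv <| by
        simp only [one_mul, Nat.cast_ofNat, Nat.add_one_sub_one, pow_one]; ring
  have key := image_le_of_deriv_right_le_deriv_boundary (a := 0) (b := 1)
    (fun t _ => (hline t).continuousAt.continuousWithinAt) (fun t _ => (hline t).hasDerivWithinAt)
    (by simp) (fun t _ => (hbound t).continuousAt.continuousWithinAt)
    (fun t _ => (hbound t).hasDerivWithinAt) (fun t ht => ?_) (Set.right_mem_Icc.mpr zero_le_one)
  · simpa using key
  calc ⟪f' (x + t • d), d⟫ = ⟪f' x, d⟫ + ⟪f' (x + t • d) - f' x, d⟫ := by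
        rw [inner_sub_left]; ring
    _ ≤ ⟪f' x, d⟫ + q (f' (x + t • d) - f' x) * p d := by gcongr; exact hpq.inner_le_mul _ _
    _ ≤ ⟪f' x, d⟫ + L * p (t • d) * p d := by
        gcongr ⟪f' x, d⟫ + ?_ * p d
        simpa using hL (x + t • d) x
    _ = ⟪f' x, d⟫ + L * p d ^ 2 * t := by
        rw [map_smul_eq_mul, Real.norm_eq_abs, abs_of_nonneg ht.1]; ring

theorem sq_le_two_mul_bregmanDiv (hpq : IsDualNorm p q)
    (htangent : ∀ x y, f x + ⟪f' x, y - x⟫ ≤ f y) (hf : ∀ x, HasGradientAt f (f' x) x)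
    (hL₀ : 0 < L) (hL : ∀ x y, q (f' x - f' y) ≤ L * p (x - y)) (a b : E) :
    q (f' a - f' b) ^ 2 ≤ 2 * L * bregmanDiv f f' b a := by
  have hd : ∀ d, -⟪f' a - f' b, d⟫ - L / 2 * p d ^ 2 ≤ bregmanDiv f f' b a := fun d => by
    have h₁ := htangent b (a + d)
    have h₂ := hpq.le_add_inner_add_sq hf hL a d
    rw [show a + d - b = (a - b) + d by abel, inner_add_right] at h₁
    rw [bregmanDiv, inner_sub_left]
    linarith
  -- the supremum of the left side of `hd` over `d = -(t • v)`, `p v ≤ 1`, is `t q(·) - L t² / 2`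
  have ht : ∀ t, 0 ≤ t → t * q (f' a - f' b) ≤ bregmanDiv f f' b a + L / 2 * t ^ 2 := by
    intro t ht
    have hsup : q (t • (f' a - f' b)) ≤ bregmanDiv f f' b a + L / 2 * t ^ 2 := by
      refine hpq.le_of_forall_inner_le fun v hv => ?_
      have hpv : p (-(t • v)) ^ 2 ≤ t ^ 2 := by
        rw [map_neg_eq_map, map_smul_eq_mul, Real.norm_eq_abs, abs_of_nonneg ht, mul_pow]
        have : p v ^ 2 ≤ 1 := pow_le_one₀ (apply_nonneg p v) hv
        nlinarith [sq_nonneg t]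
      have := hd (-(t • v))
      rw [inner_neg_right, real_inner_smul_right] at this
      rw [real_inner_smul_left]
      nlinarith
    rwa [map_smul_eq_mul, Real.norm_eq_abs, abs_of_nonneg ht] at hsup
  have := ht (q (f' a - f' b) / L) (div_nonneg (apply_nonneg _ _) hL₀.le)
  field_simp at this
  nlinarith

theorem sum_mul_sq_estimator_sub_le {m : ℕ} (hpq : IsDualNorm p q) (hm : 0 < m)
    {φi : Fin m → E → ℝ} {gφi : Fin m → E → E} {Li : Fin m → ℝ} (hLi : ∀ i, 0 < Li i)
    (hφi_tangent : ∀ i x y, φi i x + ⟪gφi i x, y - x⟫ ≤ φi i y)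
    (hφi_diff : ∀ i x, HasGradientAt (φi i) (gφi i x) x)
    (hφi_smooth : ∀ i x y, q (gφi i x - gφi i y) ≤ Li i * p (x - y))
    {Lbar : ℝ} (hLbar : Lbar = (∑ i, Li i) / m) {pr : Fin m → ℝ}
    (hpr : ∀ i, pr i = Li i / (m * Lbar)) (hφ : ∀ x, f x = (1 / m : ℝ) * ∑ i, φi i x)
    (hgφ : ∀ x, f' x = (m : ℝ)⁻¹ • ∑ i, gφi i x) (htangent : ∀ x y, f x + ⟪f' x, y - x⟫ ≤ f y)
    (hf : ∀ x, HasGradientAt f (f' x) x) (hL : ∀ x y, q (f' x - f' y) ≤ Lbar * p (x - y))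
    (v vs : E) :
    ∑ i, pr i * q (f' vs + (1 / (m * pr i)) • (gφi i v - gφi i vs) - f' v) ^ 2
      ≤ 8 * Lbar * bregmanDiv f f' v vs := by
  have hLbar_pos := (importance_weights_pos_and_sum_eq_one hm hLi hLbar hpr).1
  have hest : ∀ i, f' vs + (1 / (m * pr i)) • (gφi i v - gφi i vs) - f' v
      = (f' vs - f' v) - (1 / (m * pr i)) • (gφi i vs - gφi i v) := fun i => by module
  simp only [hest]
  refine sum_mul_seminorm_sub_div_smul_sq_le hm q hLi hLbar hpr
    (hpq.sq_le_two_mul_bregmanDiv htangent hf hLbar_pos hL vs v)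
    (fun i => hpq.sq_le_two_mul_bregmanDiv (hφi_tangent i) (hφi_diff i) (hLi i) (hφi_smooth i)
      vs v) ?_
  simp only [bregmanDiv, hφ, hgφ, real_inner_smul_left, sum_inner, Finset.sum_sub_distrib]
  ring

end IsDualNorm

section Steps

variable {w : E → ℝ} {w' : E → E}

theorem hasGradientAt_bregmanDiv {z : E} (hw : HasGradientAt w (w' z) z) (x : E) :
    HasGradientAt (bregmanDiv w w' x) (w' z - w' x) z := by
  rw [hasGradientAt_iff_hasFDerivAt, map_sub]
  have hlin : HasFDerivAt (fun y => ⟪w' x, y - x⟫) (InnerProductSpace.toDual ℝ E (w' x)) z := by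
    simpa [inner_sub_right] using
      ((InnerProductSpace.toDual ℝ E (w' x)).hasFDerivAt (x := z)).sub_const ⟪w' x, x⟫
  exact (hw.hasFDerivAt.sub_const (w x)).sub hlin

theorem smul_sub_add_eq_zero_of_forall_le {c : ℝ} {g x z : E} (hw : HasGradientAt w (w' z) z)
    (hmin : ∀ y, c * bregmanDiv w w' x z + ⟪g, z⟫ ≤ c * bregmanDiv w w' x y + ⟪g, y⟫) :
    c • (w' z - w' x) + g = 0 := by
  have hF : HasGradientAt (fun y => c * bregmanDiv w w' x y + ⟪g, y⟫)
      (c • (w' z - w' x) + g) z := by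
    rw [hasGradientAt_iff_hasFDerivAt, map_add, map_smul]
    exact ((hasGradientAt_bregmanDiv hw x).hasFDerivAt.const_mul c).add
      (InnerProductSpace.toDual ℝ E g).hasFDerivAt
  exact IsLocalMin.hasGradientAt_eq_zero (Filter.Eventually.of_forall hmin) hF

theorem mul_inner_sub_eq_bregmanDiv_of_forall_le {α : ℝ} (hα : α ≠ 0) {g x z : E}
    (hw : HasGradientAt w (w' z) z)
    (hmin : ∀ y, 1 / α * bregmanDiv w w' x z + ⟪g, z⟫ ≤ 1 / α * bregmanDiv w w' x y + ⟪g, y⟫)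
    (u : E) :
    α * ⟪g, z - u⟫ = bregmanDiv w w' x u - bregmanDiv w w' x z - bregmanDiv w w' z u := by
  have hopt := smul_sub_add_eq_zero_of_forall_le hw hmin
  have hg : w' x - w' z = α • g := by
    have := congrArg (α • ·) hopt
    simp only [smul_add, smul_smul, smul_zero, mul_one_div_cancel hα, one_smul] at this
    rw [← sub_eq_zero, ← neg_eq_zero, ← this]; abel
  rw [bregmanDiv_three_point, hg, real_inner_smul_left]

variable {p q : Seminorm ℝ E} {f : E → ℝ} {f' : E → E} {L c : ℝ}

theorem IsDualNorm.neg_inner_sub_le_of_forall_le (hpq : IsDualNorm p q)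
    (hf : ∀ x, HasGradientAt f (f' x) x) (hL : ∀ x y, q (f' x - f' y) ≤ L * p (x - y))
    (hLc : L < c) {g v y : E}
    (hmin : ∀ y', c / 2 * p (y - v) ^ 2 + ⟪g, y⟫ ≤ c / 2 * p (y' - v) ^ 2 + ⟪g, y'⟫) (d : E) :
    -⟪g, d⟫ - c / 2 * p d ^ 2 ≤ f v - f y + q (g - f' v) ^ 2 / (2 * (c - L)) := by
  have hcand := hmin (v + d)
  rw [add_sub_cancel_left, inner_add_right] at hcand
  have hdesc := hpq.le_add_inner_add_sq hf hL v (y - v)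
  rw [add_sub_cancel] at hdesc
  -- Young's inequality `ab ≤ a² / (2k) + k b² / 2` with `k = c - L`
  have hyoung : ⟪g - f' v, v - y⟫
      ≤ q (g - f' v) ^ 2 / (2 * (c - L)) + (c - L) / 2 * p (y - v) ^ 2 := by
    have hk : 0 < c - L := sub_pos.mpr hLc
    have hcs := hpq.inner_le_mul (g - f' v) (v - y)
    rw [map_sub_rev p] at hcs
    have hsq : 0 ≤ (q (g - f' v) - (c - L) * p (y - v)) ^ 2 / (2 * (c - L)) := by positivity
    have hexp : (q (g - f' v) - (c - L) * p (y - v)) ^ 2 / (2 * (c - L)) =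
        q (g - f' v) ^ 2 / (2 * (c - L)) + (c - L) / 2 * p (y - v) ^ 2
          - q (g - f' v) * p (y - v) := by
      field_simp; ring
    linarith
  simp only [inner_sub_left, inner_sub_right] at hyoung hdesc
  linarith

theorem IsDualNorm.coupling_step (hpq : IsDualNorm p q) (hf : ∀ x, HasGradientAt f (f' x) x)
    (hL : ∀ x y, q (f' x - f' y) ≤ L * p (x - y)) (hLc : L < c)
    (hw_sc : ∀ x y, w x + ⟪w' x, y - x⟫ + 1 / 2 * p (y - x) ^ 2 ≤ w y)
    {α τ : ℝ} (hα : 0 < α) (hτ : 0 < τ) (hατc : α * τ * c = 1) {g z z₁ v y₁ : E}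
    (hw : HasGradientAt w (w' z₁) z₁)
    (hz : ∀ z', 1 / α * bregmanDiv w w' z z₁ + ⟪g, z₁⟫ ≤ 1 / α * bregmanDiv w w' z z' + ⟪g, z'⟫)
    (hy : ∀ y', c / 2 * p (y₁ - v) ^ 2 + ⟪g, y₁⟫ ≤ c / 2 * p (y' - v) ^ 2 + ⟪g, y'⟫) (u : E) :
    α * ⟪g, z - u⟫ ≤ α / τ * (f v - f y₁) + α / τ * (q (g - f' v) ^ 2 / (2 * (c - L)))
      + bregmanDiv w w' z u - bregmanDiv w w' z₁ u := by
  have hmirror := mul_inner_sub_eq_bregmanDiv_of_forall_le hα.ne' hw hz u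
  have hsc : 1 / 2 * p (z₁ - z) ^ 2 ≤ bregmanDiv w w' z z₁ := by
    have := hw_sc z z₁; rw [bregmanDiv]; linarith
  have hgrad := hpq.neg_inner_sub_le_of_forall_le hf hL hLc hy (τ • (z₁ - z))
  rw [real_inner_smul_right, map_smul_eq_mul, Real.norm_eq_abs, abs_of_pos hτ] at hgrad
  have hscaled := mul_le_mul_of_nonneg_left hgrad (div_nonneg hα.le hτ.le)
  -- since `α τ c = 1`, scaling by `α / τ` leaves exactly the `½ p(z₁ - z)²` paid for by `hsc`
  have hquad : α / τ * (-(τ * ⟪g, z₁ - z⟫) - c / 2 * (τ * p (z₁ - z)) ^ 2)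
      = -(α * ⟪g, z₁ - z⟫) - 1 / 2 * p (z₁ - z) ^ 2 := by
    field_simp
    linear_combination (-p (z₁ - z) ^ 2) * hατc
  rw [hquad, mul_add] at hscaled
  rw [inner_sub_right] at hmirror hscaled ⊢
  linarith

theorem IsDualNorm.expected_coupling_step {m : ℕ} (hpq : IsDualNorm p q)
    (hf : ∀ x, HasGradientAt f (f' x) x) (hL : ∀ x y, q (f' x - f' y) ≤ L * p (x - y))
    (hL₀ : 0 < L) (hw_sc : ∀ x y, w x + ⟪w' x, y - x⟫ + 1 / 2 * p (y - x) ^ 2 ≤ w y)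
    {α τ : ℝ} (hα : 0 < α) (hτ : 0 < τ) (hατ : α * τ * (9 * L) = 1)
    {pr : Fin m → ℝ} (hpr : ∀ i, 0 ≤ pr i) (hsum : ∑ i, pr i = 1)
    {g : Fin m → E} {z v vs : E} {z₁ y₁ : Fin m → E}
    (hunbiased : ∑ i, pr i • g i = f' v)
    (hvar : ∑ i, pr i * q (g i - f' v) ^ 2 ≤ 8 * L * bregmanDiv f f' v vs)
    (hw : ∀ i, HasGradientAt w (w' (z₁ i)) (z₁ i))
    (hz : ∀ i z', 1 / α * bregmanDiv w w' z (z₁ i) + ⟪g i, z₁ i⟫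
      ≤ 1 / α * bregmanDiv w w' z z' + ⟪g i, z'⟫)
    (hy : ∀ i y', 9 * L / 2 * p (y₁ i - v) ^ 2 + ⟪g i, y₁ i⟫
      ≤ 9 * L / 2 * p (y' - v) ^ 2 + ⟪g i, y'⟫) (u : E) :
    α * ⟪f' v, z - u⟫ ≤ α / τ * (f v - ∑ i, pr i * f (y₁ i)) + α / (2 * τ) * bregmanDiv f f' v vs
      + bregmanDiv w w' z u - ∑ i, pr i * bregmanDiv w w' (z₁ i) u := by
  have hstep := fun i =>
    hpq.coupling_step hf hL (by linarith) hw_sc hα hτ hατ (hw i) (hz i) (hy i) u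
  calc α * ⟪f' v, z - u⟫ = ∑ i, pr i * (α * ⟪g i, z - u⟫) := by
        simp only [← hunbiased, sum_inner, real_inner_smul_left, Finset.mul_sum]
        exact Finset.sum_congr rfl fun i _ => by ring
    _ ≤ ∑ i, pr i * (α / τ * (f v - f (y₁ i)) + α / τ * (q (g i - f' v) ^ 2 / (2 * (9 * L - L)))
          + bregmanDiv w w' z u - bregmanDiv w w' (z₁ i) u) := by
        gcongr with i
        · exact hpr i
        · exact hstep i
    _ = α / τ * (f v - ∑ i, pr i * f (y₁ i))
          + α / (16 * L * τ) * ∑ i, pr i * q (g i - f' v) ^ 2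
          + bregmanDiv w w' z u - ∑ i, pr i * bregmanDiv w w' (z₁ i) u := by
        have hterm : ∀ i, pr i * (α / τ * (f v - f (y₁ i))
            + α / τ * (q (g i - f' v) ^ 2 / (2 * (9 * L - L)))
            + bregmanDiv w w' z u - bregmanDiv w w' (z₁ i) u)
            = pr i * (α / τ * f v + bregmanDiv w w' z u) - α / τ * (pr i * f (y₁ i))
              + α / (16 * L * τ) * (pr i * q (g i - f' v) ^ 2)
              - pr i * bregmanDiv w w' (z₁ i) u := fun i => by
          field_simp; ring
        simp only [hterm, Finset.sum_sub_distrib, Finset.sum_add_distrib, ← Finset.sum_mul, hsum,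
          ← Finset.mul_sum]
        ring
    _ ≤ _ := by
        have := mul_le_mul_of_nonneg_left hvar (by positivity : 0 ≤ α / (16 * L * τ))
        have h8 : α / (16 * L * τ) * (8 * L * bregmanDiv f f' v vs)
            = α / (2 * τ) * bregmanDiv f f' v vs := by field_simp; ring
        linarith

end Steps

theorem pdasmd_coupling_step2_general
    (dl m : ℕ) (hm : 0 < m)
    -- the norm ‖·‖_H and its dual norm ‖·‖_{H,*}
    (H : EuclideanSpace ℝ (Fin dl) → ℝ)
    (hH_def : ∀ x, H x = 0 ↔ x = 0)
    (hH_smul : ∀ (c : ℝ) (x : EuclideanSpace ℝ (Fin dl)), H (c • x) = |c| * H x)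
    (hH_tri : ∀ x y, H (x + y) ≤ H x + H y)
    (Hd : EuclideanSpace ℝ (Fin dl) → ℝ)
    (hHd : ∀ u, Hd u = sSup ((fun v => ⟪u, v⟫) '' {v | H v ≤ 1}))
    -- the finite-sum function φ = (1/m) Σ φᵢ, with gradients
    (φi : Fin m → EuclideanSpace ℝ (Fin dl) → ℝ)
    (gφi : Fin m → EuclideanSpace ℝ (Fin dl) → EuclideanSpace ℝ (Fin dl))
    (hφi_conv : ∀ i, ConvexOn ℝ Set.univ (φi i))
    (hφi_diff : ∀ i x, HasGradientAt (φi i) (gφi i x) x)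
    (Li : Fin m → ℝ) (hLi : ∀ i, 0 < Li i)
    (hφi_smooth : ∀ i x y, Hd (gφi i x - gφi i y) ≤ Li i * H (x - y))
    (Lbar : ℝ) (hLbar : Lbar = (∑ i, Li i) / m)
    (pr : Fin m → ℝ) (hpr : ∀ i, pr i = Li i / (m * Lbar))
    (φ : EuclideanSpace ℝ (Fin dl) → ℝ)
    (hφ : ∀ x, φ x = (1 / m : ℝ) * ∑ i, φi i x)
    (gφ : EuclideanSpace ℝ (Fin dl) → EuclideanSpace ℝ (Fin dl))
    (hgφ : ∀ x, gφ x = (m : ℝ)⁻¹ • ∑ i, gφi i x)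
    -- the mirror map: differentiable, 1-strongly convex and γ-smooth w.r.t. ‖·‖_H
    (w : EuclideanSpace ℝ (Fin dl) → ℝ)
    (gw : EuclideanSpace ℝ (Fin dl) → EuclideanSpace ℝ (Fin dl))
    (hw_diff : ∀ x, HasGradientAt w (gw x) x)
    (hw_sc : ∀ x y, w x + ⟪gw x, y - x⟫ + (1 / 2) * H (y - x) ^ 2 ≤ w y)
    (Vb : EuclideanSpace ℝ (Fin dl) → EuclideanSpace ℝ (Fin dl) → ℝ)
    (hVb : ∀ x y, Vb x y = w y - w x - ⟪gw x, y - x⟫)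
    -- one inner step of PDASMD
    (s : ℕ) (τ1 τ2 α : ℝ)
    (hτ1 : τ1 = 2 / ((s : ℝ) + 4)) (hτ2 : τ2 = 1 / 2) (hα : α = 1 / (9 * τ1 * Lbar))
    (zk yk vts vk1 : EuclideanSpace ℝ (Fin dl))
    (hvk1 : vk1 = τ1 • zk + τ2 • vts + (1 - τ1 - τ2) • yk)
    (gt : Fin m → EuclideanSpace ℝ (Fin dl))
    (hgt : ∀ i, gt i = gφ vts + (1 / (m * pr i)) • (gφi i vk1 - gφi i vts))
    (z1 y1 : Fin m → EuclideanSpace ℝ (Fin dl))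
    (hz1 : ∀ i z, (1 / α) * Vb zk (z1 i) + ⟪gt i, z1 i⟫
      ≤ (1 / α) * Vb zk z + ⟪gt i, z⟫)
    (hy1 : ∀ i y, (9 * Lbar / 2) * H (y1 i - vk1) ^ 2 + ⟪gt i, y1 i⟫
      ≤ (9 * Lbar / 2) * H (y - vk1) ^ 2 + ⟪gt i, y⟫) :
    ∀ u : EuclideanSpace ℝ (Fin dl),
      α * ⟪gφ vk1, vk1 - u⟫
        ≤ α * φ vk1 + (α * (1 - τ1 - τ2) / τ1) * φ yk
          + (α / τ1) * (τ2 * φ vts - ∑ i, pr i * φ (y1 i))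
          + Vb zk u - ∑ i, pr i * Vb (z1 i) u := by
  intro u
  subst hτ2
  obtain rfl : Vb = bregmanDiv w gw := by funext x y; exact hVb x y
  obtain ⟨hLbar_pos, hpr_pos, hpr_sum⟩ := importance_weights_pos_and_sum_eq_one hm hLi hLbar hpr
  have hτ1_pos : 0 < τ1 := by rw [hτ1]; positivity
  have hτ1_le : τ1 ≤ 1 / 2 := by
    rw [hτ1, div_le_iff₀ (by positivity)]; linarith [(Nat.cast_nonneg s : (0 : ℝ) ≤ s)]
  have hα_pos : 0 < α := by rw [hα]; positivity
  have hατ : α * τ1 * (9 * Lbar) = 1 := by rw [hα]; field_simp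
  let p : Seminorm ℝ (EuclideanSpace ℝ (Fin dl)) :=
    Seminorm.of H hH_tri fun c x => by rw [hH_smul, Real.norm_eq_abs]
  have hpq : IsDualNorm p Hd := funext hHd ▸ isDualNorm_sSup p fun x => (hH_def x).1
  obtain ⟨q, rfl⟩ : ∃ q : Seminorm ℝ _, ⇑q = Hd := ⟨hpq.toSeminorm, rfl⟩
  have hφi_tangent : ∀ i x y, φi i x + ⟪gφi i x, y - x⟫ ≤ φi i y := fun i x =>
    (hφi_conv i).add_inner_sub_le_of_hasGradientAt (hφi_diff i x)
  have hφ_grad : ∀ x, HasGradientAt φ (gφ x) x := fun x => by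
    rw [funext hφ, hgφ]; exact hasGradientAt_average fun i => hφi_diff i x
  have hφ_tangent : ∀ x y, φ x + ⟪gφ x, y - x⟫ ≤ φ y := by
    simpa only [hφ, hgφ] using average_add_inner_sub_le hφi_tangent
  have hφ_smooth : ∀ x y, q (gφ x - gφ y) ≤ Lbar * p (x - y) := fun x y => by
    rw [hgφ, hgφ, hLbar]; exact seminorm_average_sub_le p q hφi_smooth x y
  have hunbiased : ∑ i, pr i • gt i = gφ vk1 := by
    simp only [hgt, sum_smul_add_div_smul (fun i => (hpr_pos i).ne') hpr_sum, hgφ]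
    rw [Finset.sum_sub_distrib, smul_sub]; abel
  have hvar : ∑ i, pr i * q (gt i - gφ vk1) ^ 2 ≤ 8 * Lbar * bregmanDiv φ gφ vk1 vts := by
    simpa only [← hgt] using hpq.sum_mul_sq_estimator_sub_le hm hLi hφi_tangent hφi_diff hφi_smooth
      hLbar hpr hφ hgφ hφ_tangent hφ_grad hφ_smooth vk1 vts
  exact mul_inner_sub_le_of_linear_coupling hτ1_pos hτ1_le hα_pos.le hvk1 (hφ_tangent vk1 yk)
    (hpq.expected_coupling_step hφ_grad hφ_smooth hLbar_pos hw_sc hα_pos hτ1_pos hατ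
      (fun i => (hpr_pos i).le) hpr_sum hunbiased hvar (fun i => hw_diff _) hz1 hy1 u)

/-- Coupling step 2.  Under the one-inner-step setup of PDASMD, for every `u`:
`α ⟨∇φ(v_{k+1}), v_{k+1} − u⟩ ≤ α φ(v_{k+1}) + (α(1 − τ₁ − τ₂)/τ₁) φ(y_k)
+ (α/τ₁)(τ₂ φ(ṽ^s) − E[φ(y_{k+1})]) + V_{z_k}(u) − E[V_{z_{k+1}}(u)]`,
where `E[g] = Σ_i p_i g(i)`. -/
theorem pdasmd_coupling_step2
    (dl m : ℕ) (hm : 0 < m)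
    -- the norm ‖·‖_H and its dual norm ‖·‖_{H,*}
    (H : EuclideanSpace ℝ (Fin dl) → ℝ)
    (hH_def : ∀ x, H x = 0 ↔ x = 0)
    (hH_smul : ∀ (c : ℝ) (x : EuclideanSpace ℝ (Fin dl)), H (c • x) = |c| * H x)
    (hH_tri : ∀ x y, H (x + y) ≤ H x + H y)
    (Hd : EuclideanSpace ℝ (Fin dl) → ℝ)
    (hHd : ∀ u, Hd u = sSup ((fun v => ⟪u, v⟫) '' {v | H v ≤ 1}))
    -- the finite-sum function φ = (1/m) Σ φᵢ, with gradients
    (φi : Fin m → EuclideanSpace ℝ (Fin dl) → ℝ)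
    (gφi : Fin m → EuclideanSpace ℝ (Fin dl) → EuclideanSpace ℝ (Fin dl))
    (hφi_conv : ∀ i, ConvexOn ℝ Set.univ (φi i))
    (hφi_diff : ∀ i x, HasGradientAt (φi i) (gφi i x) x)
    (Li : Fin m → ℝ) (hLi : ∀ i, 0 < Li i)
    (hφi_smooth : ∀ i x y, Hd (gφi i x - gφi i y) ≤ Li i * H (x - y))
    (Lbar : ℝ) (hLbar : Lbar = (∑ i, Li i) / m)
    (pr : Fin m → ℝ) (hpr : ∀ i, pr i = Li i / (m * Lbar))
    (φ : EuclideanSpace ℝ (Fin dl) → ℝ)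
    (hφ : ∀ x, φ x = (1 / m : ℝ) * ∑ i, φi i x)
    (gφ : EuclideanSpace ℝ (Fin dl) → EuclideanSpace ℝ (Fin dl))
    (hgφ : ∀ x, gφ x = (m : ℝ)⁻¹ • ∑ i, gφi i x)
    -- the mirror map: differentiable, 1-strongly convex and γ-smooth w.r.t. ‖·‖_H
    (γ : ℝ) (w : EuclideanSpace ℝ (Fin dl) → ℝ)
    (gw : EuclideanSpace ℝ (Fin dl) → EuclideanSpace ℝ (Fin dl))
    (hw_diff : ∀ x, HasGradientAt w (gw x) x)
    (hw_sc : ∀ x y, w x + ⟪gw x, y - x⟫ + (1 / 2) * H (y - x) ^ 2 ≤ w y)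
    (hw_smooth : ∀ x y, Hd (gw x - gw y) ≤ γ * H (x - y))
    (Vb : EuclideanSpace ℝ (Fin dl) → EuclideanSpace ℝ (Fin dl) → ℝ)
    (hVb : ∀ x y, Vb x y = w y - w x - ⟪gw x, y - x⟫)
    -- one inner step of PDASMD
    (s : ℕ) (τ1 τ2 α : ℝ)
    (hτ1 : τ1 = 2 / ((s : ℝ) + 4)) (hτ2 : τ2 = 1 / 2) (hα : α = 1 / (9 * τ1 * Lbar))
    (zk yk vts vk1 : EuclideanSpace ℝ (Fin dl))
    (hvk1 : vk1 = τ1 • zk + τ2 • vts + (1 - τ1 - τ2) • yk)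
    (gt : Fin m → EuclideanSpace ℝ (Fin dl))
    (hgt : ∀ i, gt i = gφ vts + (1 / (m * pr i)) • (gφi i vk1 - gφi i vts))
    (z1 y1 : Fin m → EuclideanSpace ℝ (Fin dl))
    (hz1 : ∀ i z, (1 / α) * Vb zk (z1 i) + ⟪gt i, z1 i⟫
      ≤ (1 / α) * Vb zk z + ⟪gt i, z⟫)
    (hy1 : ∀ i y, (9 * Lbar / 2) * H (y1 i - vk1) ^ 2 + ⟪gt i, y1 i⟫
      ≤ (9 * Lbar / 2) * H (y - vk1) ^ 2 + ⟪gt i, y⟫) :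
    ∀ u : EuclideanSpace ℝ (Fin dl),
      α * ⟪gφ vk1, vk1 - u⟫
        ≤ α * φ vk1 + (α * (1 - τ1 - τ2) / τ1) * φ yk
          + (α / τ1) * (τ2 * φ vts - ∑ i, pr i * φ (y1 i))
          + Vb zk u - ∑ i, pr i * Vb (z1 i) u :=
  pdasmd_coupling_step2_general dl m hm H hH_def hH_smul hH_tri Hd hHd φi gφi hφi_conv hφi_diff Li
    hLi hφi_smooth Lbar hLbar pr hpr φ hφ gφ hgφ w gw hw_diff hw_sc Vb hVb s τ1 τ2 α hτ1 hτ2 hα zk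
    yk vts vk1 hvk1 gt hgt z1 y1 hz1 hy1
end

section
/- Each semi-dual component φ_i of entropy-regularized optimal transport is (5 n p'_i / η)-smooth with respect to the ℓ∞ norm: for every i ∈ {1,…,n} and all λ, λ' ∈ ℝⁿ, ‖∇φ_i(λ) − ∇φ_i(λ')‖₁ ≤ (5 n p'_i / η) ‖λ − λ'‖_∞. -/
open scoped BigOperators

/-- The `i`-th semi-dual component of entropy-regularized optimal transport:
`φ_i(λ) = n p'_i ( −⟨q', λ⟩ − η log p'_i + η log( Σ_j exp((λ_j − C_{ij} − η)/η) ) + η )`. -/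
noncomputable def otSemiDualComponent (n : ℕ) (η : ℝ) (C : Fin n → Fin n → ℝ)
    (p' q' : Fin n → ℝ) (i : Fin n) (lam : EuclideanSpace ℝ (Fin n)) : ℝ :=
  n * p' i * (-(∑ j, q' j * lam j) - η * Real.log (p' i)
    + η * Real.log (∑ j, Real.exp ((lam j - C i j - η) / η)) + η)

/-! The gradient of `φ_i` at `λ` is `n p'_i (softmax ((λ - C_i - η) / η) - q')`, so everything
reduces to an `ℓ∞ → ℓ₁` Lipschitz bound for softmax. Perturbing the logits by at most `s` in every
coordinate scales each softmax weight by a factor in `[e^{-2s}, e^{2s}]`, so the two softmax vectors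
are at `ℓ₁` distance at most `e^{2s} - 1`, and trivially at most `2`. For `s < 2/5` the bound
`e^x ≤ 1 + x + x²` (`|x| ≤ 1`) turns the first estimate into `5 s`; otherwise `2 ≤ 5 s`. -/

open Real Finset

section Softmax

variable {ι : Type*} [Fintype ι]

noncomputable def softmax (u : ι → ℝ) (k : ι) : ℝ :=
  exp (u k) / ∑ j, exp (u j)

lemma sum_exp_pos [Nonempty ι] (u : ι → ℝ) : 0 < ∑ j, exp (u j) :=
  sum_pos (fun j _ => exp_pos (u j)) univ_nonempty

lemma softmax_nonneg (u : ι → ℝ) (k : ι) : 0 ≤ softmax u k :=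
  div_nonneg (exp_pos _).le (sum_nonneg fun _ _ => (exp_pos _).le)

lemma sum_softmax [Nonempty ι] (u : ι → ℝ) : ∑ k, softmax u k = 1 := by
  simp only [softmax]
  rw [← sum_div, div_self (sum_exp_pos u).ne']

lemma softmax_le_exp_mul_softmax {u v : ι → ℝ} {s : ℝ} (h : ∀ j, |u j - v j| ≤ s) (k : ι) :
    softmax u k ≤ exp (2 * s) * softmax v k := by
  have : Nonempty ι := ⟨k⟩
  have hexp : ∀ j, exp (u j) ≤ exp s * exp (v j) ∧ exp (v j) ≤ exp s * exp (u j) := fun j => by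
    rw [← exp_add, ← exp_add, exp_le_exp, exp_le_exp]
    constructor <;> linarith [abs_le.1 (h j)]
  have hsum : ∑ j, exp (v j) ≤ exp s * ∑ j, exp (u j) := by
    rw [mul_sum]; exact sum_le_sum fun j _ => (hexp j).2
  simp only [softmax]
  rw [mul_div_assoc', div_le_div_iff₀ (sum_exp_pos u) (sum_exp_pos v), two_mul, exp_add]
  calc exp (u k) * ∑ j, exp (v j) ≤ (exp s * exp (v k)) * (exp s * ∑ j, exp (u j)) :=
        mul_le_mul (hexp k).1 hsum (sum_exp_pos v).le (by positivity)
    _ = exp s * exp s * exp (v k) * ∑ j, exp (u j) := by ring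

lemma abs_sub_le_sub_one_mul_of_le_mul {x y c : ℝ} (hy : 0 ≤ y) (hc : 0 < c)
    (hxy : x ≤ c * y) (hyx : y ≤ c * x) : |x - y| ≤ (c - 1) * y := by
  rw [abs_sub_le_iff]
  constructor
  · linarith
  · nlinarith [mul_nonneg hy (sq_nonneg (c - 1))]

lemma sum_abs_softmax_sub_le_exp_sub_one [Nonempty ι] {u v : ι → ℝ} {s : ℝ}
    (h : ∀ j, |u j - v j| ≤ s) :
    ∑ k, |softmax u k - softmax v k| ≤ exp (2 * s) - 1 := by
  have h' : ∀ j, |v j - u j| ≤ s := fun j => abs_sub_comm (u j) (v j) ▸ h j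
  calc ∑ k, |softmax u k - softmax v k| ≤ ∑ k, (exp (2 * s) - 1) * softmax v k :=
        sum_le_sum fun k _ => abs_sub_le_sub_one_mul_of_le_mul (softmax_nonneg v k) (exp_pos _)
          (softmax_le_exp_mul_softmax h k) (softmax_le_exp_mul_softmax h' k)
    _ = exp (2 * s) - 1 := by rw [← mul_sum, sum_softmax, mul_one]

lemma sum_abs_softmax_sub_le_two [Nonempty ι] (u v : ι → ℝ) :
    ∑ k, |softmax u k - softmax v k| ≤ 2 :=
  calc ∑ k, |softmax u k - softmax v k| ≤ ∑ k, (softmax u k + softmax v k) :=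
        sum_le_sum fun k _ => (abs_sub _ _).trans
          (by rw [abs_of_nonneg (softmax_nonneg u k), abs_of_nonneg (softmax_nonneg v k)])
    _ = 2 := by rw [sum_add_distrib, sum_softmax, sum_softmax]; norm_num

lemma sum_abs_softmax_sub_le [Nonempty ι] (u v : ι → ℝ) :
    ∑ k, |softmax u k - softmax v k| ≤ 5 * ‖u - v‖ := by
  set s := ‖u - v‖
  rcases le_or_gt (2 / 5) s with hs | hs
  · linarith [sum_abs_softmax_sub_le_two u v]
  have hcoord : ∀ j, |u j - v j| ≤ s := fun j => norm_le_pi_norm (u - v) j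
  have hs0 : 0 ≤ s := norm_nonneg _
  have htaylor := (abs_le.1 (abs_exp_sub_one_sub_id_le (x := 2 * s)
    (by rw [abs_of_nonneg (by positivity)]; linarith))).2
  nlinarith [sum_abs_softmax_sub_le_exp_sub_one hcoord]

end Softmax

lemma hasGradientAt_of_hasFDerivAt_eq_sum {ι : Type*} [Fintype ι]
    {f : EuclideanSpace ℝ ι → ℝ} {L : EuclideanSpace ℝ ι →L[ℝ] ℝ} {x : EuclideanSpace ℝ ι}
    (g : ι → ℝ) (hf : HasFDerivAt f L x) (hL : ∀ v, L v = ∑ j, g j * v j) :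
    HasGradientAt f (WithLp.toLp 2 g) x := by
  rw [hasGradientAt_iff_hasFDerivAt]
  refine hf.congr_fderiv (ContinuousLinearMap.ext fun v => ?_)
  simp [hL, PiLp.inner_apply, mul_comm]

lemma HasFDerivAt.log_sum_exp {ι E : Type*} [Fintype ι] [Nonempty ι] [NormedAddCommGroup E]
    [NormedSpace ℝ E] {u : ι → E → ℝ} {u' : ι → E →L[ℝ] ℝ} {x : E}
    (hu : ∀ j, HasFDerivAt (u j) (u' j) x) :
    HasFDerivAt (fun y => Real.log (∑ j, Real.exp (u j y)))
      (∑ j, softmax (fun j => u j x) j • u' j) x := by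
  have := (HasFDerivAt.fun_sum fun j _ => (hu j).exp).log (sum_exp_pos fun j => u j x).ne'
  convert this using 1
  simp only [softmax, smul_sum, smul_smul, div_eq_inv_mul]

lemma gradient_otSemiDualComponent {n : ℕ} {η : ℝ} (hη : η ≠ 0) (C : Fin n → Fin n → ℝ)
    (p' q' : Fin n → ℝ) (i : Fin n) (lam : EuclideanSpace ℝ (Fin n)) :
    gradient (otSemiDualComponent n η C p' q' i) lam = WithLp.toLp 2 (fun k =>
      n * p' i * (softmax (fun j => (lam j - C i j - η) / η) k - q' k)) := by
  have : Nonempty (Fin n) := ⟨i⟩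
  have hproj (j : Fin n) : HasFDerivAt (fun x : EuclideanSpace ℝ (Fin n) => x j)
      (EuclideanSpace.proj j : EuclideanSpace ℝ (Fin n) →L[ℝ] ℝ) lam :=
    (EuclideanSpace.proj j : EuclideanSpace ℝ (Fin n) →L[ℝ] ℝ).hasFDerivAt
  have hlin := HasFDerivAt.fun_sum fun j (_ : j ∈ univ) => (hproj j).const_mul (q' j)
  have hexponent (j : Fin n) :
      HasFDerivAt (fun x : EuclideanSpace ℝ (Fin n) => (x j - C i j - η) / η)
      (η⁻¹ • (EuclideanSpace.proj j : EuclideanSpace ℝ (Fin n) →L[ℝ] ℝ)) lam := by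
    simpa only [div_eq_inv_mul] using (((hproj j).sub_const (C i j)).sub_const η).const_mul η⁻¹
  have hlse := HasFDerivAt.log_sum_exp hexponent
  refine HasGradientAt.gradient (hasGradientAt_of_hasFDerivAt_eq_sum _
    (((((hlin.neg).sub_const _).add (hlse.const_mul η)).add_const η).const_mul _) fun v => ?_)
  simp only [smul_add, smul_neg, add_apply, neg_apply, smul_apply, _root_.sum_apply,
    PiLp.proj_apply, smul_eq_mul, mul_sum, mul_sub, sub_mul, sum_sub_distrib]
  rw [neg_add_eq_sub]
  congr 1 <;> refine sum_congr rfl fun k _ => ?_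
  · field_simp
  · ring

theorem otSemiDualComponent_smooth_linf_general (n : ℕ) (η : ℝ) (hη : 0 < η)
    (C : Fin n → Fin n → ℝ) (p' q' : Fin n → ℝ)
    (hp_pos : ∀ i, 0 < p' i) :
    ∀ (i : Fin n) (lam lam' : EuclideanSpace ℝ (Fin n)),
      ∑ k, |gradient (otSemiDualComponent n η C p' q' i) lam k
            - gradient (otSemiDualComponent n η C p' q' i) lam' k|
        ≤ (5 * n * p' i / η) * ‖(fun k => lam k - lam' k : Fin n → ℝ)‖ := by
  intro i lam lam'
  have : Nonempty (Fin n) := ⟨i⟩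
  set u : Fin n → ℝ := fun j => (lam j - C i j - η) / η
  set v : Fin n → ℝ := fun j => (lam' j - C i j - η) / η
  have huv : u - v = η⁻¹ • (fun k => lam k - lam' k : Fin n → ℝ) := by
    ext k; simp only [u, v, Pi.sub_apply, Pi.smul_apply, smul_eq_mul]; ring
  have hweight : 0 ≤ (n : ℝ) * p' i := by have := hp_pos i; positivity
  simp only [gradient_otSemiDualComponent hη.ne', PiLp.toLp_apply, ← mul_sub,
    sub_sub_sub_cancel_right, abs_mul, abs_of_nonneg hweight, ← mul_sum]
  calc n * p' i * ∑ k, |softmax u k - softmax v k| ≤ n * p' i * (5 * ‖u - v‖) := by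
        gcongr; exact sum_abs_softmax_sub_le u v
    _ = _ := by
        rw [huv, norm_smul, norm_inv, Real.norm_of_nonneg hη.le]; ring

/-- each semi-dual component `φ_i` is `(5 n p'_i / η)`-smooth w.r.t. the
ℓ∞ norm: `‖∇φ_i(λ) − ∇φ_i(λ')‖₁ ≤ (5 n p'_i / η) ‖λ − λ'‖_∞`.  The ℓ₁ norm of the gradient
difference is written out as a sum of absolute values of its coordinates and the ℓ∞ norm is
the sup norm on `Fin n → ℝ`. -/
theorem otSemiDualComponent_smooth_linf (n : ℕ) (hn : 1 ≤ n) (η : ℝ) (hη : 0 < η)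
    (C : Fin n → Fin n → ℝ) (p' q' : Fin n → ℝ)
    (hp_pos : ∀ i, 0 < p' i) (hq_nonneg : ∀ j, 0 ≤ q' j)
    (hp_sum : ∑ i, p' i = 1) (hq_sum : ∑ j, q' j = 1) :
    ∀ (i : Fin n) (lam lam' : EuclideanSpace ℝ (Fin n)),
      ∑ k, |gradient (otSemiDualComponent n η C p' q' i) lam k
            - gradient (otSemiDualComponent n η C p' q' i) lam' k|
        ≤ (5 * n * p' i / η) * ‖(fun k => lam k - lam' k : Fin n → ℝ)‖ :=
  otSemiDualComponent_smooth_linf_general n η hη C p' q' hp_pos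
end
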